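/- arXiv:1011.3979 — 4 statements merged into one kernel-verified Lean document; each statement's English description precedes it below -/
import Mathlib

section
/- Let κ > 0 be a real number and for t > 0 set α(t) = ∫₀^{κ√t} e^{-r²/2} dr. Then for every t > 0: ∫₀^∞ e^{-r²/(2t)} r sinh(κr) dr = √(π/2) κ t^{3/2} e^{κ²t/2}, and ∫₀^∞ e^{-r²/(2t)} r cosh(κr) dr = t + κ t^{3/2} e^{κ²t/2} α(t). -/
open Real MeasureTheory Set Filter Topology

/-!
Completing the square, `exp (-x²/(2t)) * exp (c x) = exp (c²t/2) * exp (-(x - ct)²/(2t))`, turns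
`∫₀^∞ exp (-x²/(2t)) x exp (c x) dx` into a first moment of a shifted Gaussian, which equals
`t + c t exp (c²t/2) ∫_{-ct}^∞ exp (-u²/(2t)) du`. Taking `c = ±κ`, the `sinh` integral involves
the sum of the Gaussian tails beyond `-κt` and `κt`, i.e. the total mass `√(2πt)`, and the `cosh`
integral their difference `∫_{-κt}^{κt} exp (-u²/(2t)) du`, which rescales to `2 √t α(t)`.
-/

theorem setIntegral_Ioi_comp_sub_right {E : Type*} [NormedAddCommGroup E] [NormedSpace ℝ E]
    (f : ℝ → E) (a c : ℝ) : ∫ x in Ioi a, f (x - c) = ∫ x in Ioi (a - c), f x := by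
  have h := (measurePreserving_sub_right volume c).setIntegral_preimage_emb
    (measurableEmbedding_subRight c) f (Ioi (a - c))
  simpa using h

section Even

variable {E : Type*} [NormedAddCommGroup E] [NormedSpace ℝ E] {f : ℝ → E}

theorem integral_Ioi_neg_add_integral_Ioi_of_even (hf : ∀ x, f (-x) = f x) (hfi : Integrable f)
    (a : ℝ) : (∫ x in Ioi (-a), f x) + ∫ x in Ioi a, f x = ∫ x, f x := by
  rw [add_comm, ← intervalIntegral.integral_Iic_add_Ioi (b := -a) hfi.integrableOn hfi.integrableOn,
    ← integral_comp_neg_Ioi]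
  simp only [hf]

theorem integral_Ioi_neg_sub_integral_Ioi_of_even (hf : ∀ x, f (-x) = f x) (hfi : Integrable f)
    (a : ℝ) : (∫ x in Ioi (-a), f x) - ∫ x in Ioi a, f x = 2 • ∫ x in 0..a, f x := by
  have hsymm : ∫ x in -a..0, f x = ∫ x in 0..a, f x := by
    simpa only [hf, neg_zero] using (intervalIntegral.integral_comp_neg (a := 0) (b := a) f).symm
  rw [intervalIntegral.integral_Ioi_sub_Ioi' hfi.integrableOn hfi.integrableOn,
    ← intervalIntegral.integral_add_adjacent_intervals (b := 0) hfi.intervalIntegrable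
      hfi.intervalIntegrable, hsymm, two_smul]

end Even

section Gaussian

variable {t : ℝ}

theorem exp_neg_sq_div_eq_exp_neg_mul_sq (t x : ℝ) :
    exp (-x ^ 2 / (2 * t)) = exp (-(2 * t)⁻¹ * x ^ 2) := by
  ring_nf

theorem integrable_exp_neg_sq_div (ht : 0 < t) :
    Integrable fun x : ℝ ↦ exp (-x ^ 2 / (2 * t)) := by
  simpa only [exp_neg_sq_div_eq_exp_neg_mul_sq] using integrable_exp_neg_mul_sq (by positivity)

theorem integrable_mul_exp_neg_sq_div (ht : 0 < t) :
    Integrable fun x : ℝ ↦ x * exp (-x ^ 2 / (2 * t)) := by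
  simpa only [exp_neg_sq_div_eq_exp_neg_mul_sq] using integrable_mul_exp_neg_mul_sq (by positivity)

theorem integral_exp_neg_sq_div (ht : 0 < t) :
    ∫ x, exp (-x ^ 2 / (2 * t)) = √(2 * π * t) := by
  simp only [exp_neg_sq_div_eq_exp_neg_mul_sq, integral_gaussian]
  congr 1
  field_simp

theorem hasDerivAt_neg_mul_exp_neg_sq_div (ht : t ≠ 0) (x : ℝ) :
    HasDerivAt (fun y ↦ -t * exp (-y ^ 2 / (2 * t))) (x * exp (-x ^ 2 / (2 * t))) x := by
  have h : HasDerivAt (fun y : ℝ ↦ -y ^ 2 / (2 * t)) (-(2 * x ^ 1) / (2 * t)) x :=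
    (hasDerivAt_pow 2 x).neg.div_const (2 * t)
  refine (h.exp.const_mul (-t)).congr_deriv ?_
  field_simp

theorem tendsto_exp_neg_sq_div_atTop (ht : 0 < t) :
    Tendsto (fun x : ℝ ↦ exp (-x ^ 2 / (2 * t))) atTop (𝓝 0) := by
  refine tendsto_exp_atBot.comp (Tendsto.atBot_div_const (by positivity) ?_)
  exact tendsto_neg_atTop_atBot.comp (tendsto_pow_atTop two_ne_zero)

theorem integral_Ioi_mul_exp_neg_sq_div (ht : 0 < t) (a : ℝ) :
    ∫ x in Ioi a, x * exp (-x ^ 2 / (2 * t)) = t * exp (-a ^ 2 / (2 * t)) := by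
  have hlim := (tendsto_exp_neg_sq_div_atTop ht).const_mul (-t)
  rw [mul_zero] at hlim
  rw [integral_Ioi_of_hasDerivAt_of_tendsto (by fun_prop)
    (fun x _ ↦ hasDerivAt_neg_mul_exp_neg_sq_div ht.ne' x) (integrable_mul_exp_neg_sq_div ht).integrableOn
    hlim]
  ring

theorem exp_neg_sq_div_mul_exp (ht : t ≠ 0) (c x : ℝ) :
    exp (-x ^ 2 / (2 * t)) * exp (c * x) =
      exp (c ^ 2 * t / 2) * exp (-(x - c * t) ^ 2 / (2 * t)) := by
  rw [← exp_add, ← exp_add]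
  congr 1
  field_simp
  ring

theorem exp_neg_sq_div_mul_mul_exp (ht : t ≠ 0) (c x : ℝ) :
    exp (-x ^ 2 / (2 * t)) * x * exp (c * x) =
      exp (c ^ 2 * t / 2) * ((x - c * t) * exp (-(x - c * t) ^ 2 / (2 * t)) +
        c * t * exp (-(x - c * t) ^ 2 / (2 * t))) := by
  rw [mul_right_comm, exp_neg_sq_div_mul_exp ht]
  ring

theorem integrable_exp_neg_sq_div_mul_mul_exp (ht : 0 < t) (c : ℝ) :
    Integrable fun x : ℝ ↦ exp (-x ^ 2 / (2 * t)) * x * exp (c * x) := by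
  simp only [exp_neg_sq_div_mul_mul_exp ht.ne']
  exact (((integrable_mul_exp_neg_sq_div ht).add
    ((integrable_exp_neg_sq_div ht).const_mul _)).comp_sub_right _).const_mul _

theorem integral_Ioi_exp_neg_sq_div_mul_mul_exp (ht : 0 < t) (c : ℝ) :
    ∫ x in Ioi 0, exp (-x ^ 2 / (2 * t)) * x * exp (c * x) =
      t + c * t * exp (c ^ 2 * t / 2) * ∫ x in Ioi (-(c * t)), exp (-x ^ 2 / (2 * t)) := by
  have hK : exp (c ^ 2 * t / 2) * exp (-(-(c * t)) ^ 2 / (2 * t)) = 1 := by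
    rw [← exp_add, exp_eq_one_iff]
    field_simp
    ring
  simp only [exp_neg_sq_div_mul_mul_exp ht.ne']
  rw [integral_const_mul, setIntegral_Ioi_comp_sub_right
      (fun u ↦ u * exp (-u ^ 2 / (2 * t)) + c * t * exp (-u ^ 2 / (2 * t))),
    integral_add (integrable_mul_exp_neg_sq_div ht).integrableOn
      ((integrable_exp_neg_sq_div ht).const_mul _).integrableOn,
    integral_const_mul, integral_Ioi_mul_exp_neg_sq_div ht, zero_sub]
  linear_combination t * hK

theorem integral_Ioi_exp_neg_sq_div_mul_mul_sinh (ht : 0 < t) (κ : ℝ) :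
    ∫ x in Ioi 0, exp (-x ^ 2 / (2 * t)) * x * sinh (κ * x) =
      κ * t * exp (κ ^ 2 * t / 2) / 2 *
        ((∫ x in Ioi (-(κ * t)), exp (-x ^ 2 / (2 * t))) +
          ∫ x in Ioi (κ * t), exp (-x ^ 2 / (2 * t))) := by
  have h : ∀ x, exp (-x ^ 2 / (2 * t)) * x * sinh (κ * x) =
      (exp (-x ^ 2 / (2 * t)) * x * exp (κ * x) -
        exp (-x ^ 2 / (2 * t)) * x * exp (-κ * x)) / 2 := by
    intro x
    rw [sinh_eq, neg_mul]
    ring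
  simp only [h]
  rw [integral_div, integral_sub (integrable_exp_neg_sq_div_mul_mul_exp ht κ).integrableOn
    (integrable_exp_neg_sq_div_mul_mul_exp ht (-κ)).integrableOn,
    integral_Ioi_exp_neg_sq_div_mul_mul_exp ht, integral_Ioi_exp_neg_sq_div_mul_mul_exp ht,
    neg_sq, neg_mul, neg_neg]
  ring

theorem integral_Ioi_exp_neg_sq_div_mul_mul_cosh (ht : 0 < t) (κ : ℝ) :
    ∫ x in Ioi 0, exp (-x ^ 2 / (2 * t)) * x * cosh (κ * x) =
      t + κ * t * exp (κ ^ 2 * t / 2) / 2 *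
        ((∫ x in Ioi (-(κ * t)), exp (-x ^ 2 / (2 * t))) -
          ∫ x in Ioi (κ * t), exp (-x ^ 2 / (2 * t))) := by
  have h : ∀ x, exp (-x ^ 2 / (2 * t)) * x * cosh (κ * x) =
      (exp (-x ^ 2 / (2 * t)) * x * exp (κ * x) +
        exp (-x ^ 2 / (2 * t)) * x * exp (-κ * x)) / 2 := by
    intro x
    rw [cosh_eq, neg_mul]
    ring
  simp only [h]
  rw [integral_div, integral_add (integrable_exp_neg_sq_div_mul_mul_exp ht κ).integrableOn
    (integrable_exp_neg_sq_div_mul_mul_exp ht (-κ)).integrableOn,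
    integral_Ioi_exp_neg_sq_div_mul_mul_exp ht, integral_Ioi_exp_neg_sq_div_mul_mul_exp ht,
    neg_sq, neg_mul, neg_neg]
  ring

theorem integral_exp_neg_sq_div_sqrt_mul (ht : 0 < t) (b : ℝ) :
    ∫ x in 0..√t * b, exp (-x ^ 2 / (2 * t)) = √t * ∫ x in 0..b, exp (-x ^ 2 / 2) := by
  have h : ∀ x, exp (-(√t * x) ^ 2 / (2 * t)) = exp (-x ^ 2 / 2) := by
    intro x
    rw [mul_pow, sq_sqrt ht.le]
    field_simp
  have hsqrt : √t ≠ 0 := (sqrt_pos.2 ht).ne'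
  have hscale := intervalIntegral.integral_comp_mul_left (a := 0) (b := b)
    (fun x ↦ exp (-x ^ 2 / (2 * t))) hsqrt
  simp only [h, mul_zero, smul_eq_mul] at hscale
  rw [hscale]
  field_simp

end Gaussian

theorem heat_integrals_order_one_general (κ : ℝ) (t : ℝ) (ht : 0 < t) :
    (∫ r in Set.Ioi (0 : ℝ), Real.exp (-r ^ 2 / (2 * t)) * r * Real.sinh (κ * r)) =
      Real.sqrt (π / 2) * κ * t ^ ((3 : ℝ) / 2) * Real.exp (κ ^ 2 * t / 2) ∧
    (∫ r in Set.Ioi (0 : ℝ), Real.exp (-r ^ 2 / (2 * t)) * r * Real.cosh (κ * r)) =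
      t + κ * t ^ ((3 : ℝ) / 2) * Real.exp (κ ^ 2 * t / 2) *
        (∫ r in (0 : ℝ)..(κ * Real.sqrt t), Real.exp (-r ^ 2 / 2)) := by
  have heven : ∀ x : ℝ, exp (-(-x) ^ 2 / (2 * t)) = exp (-x ^ 2 / (2 * t)) := fun x ↦ by
    rw [neg_sq]
  have hpow : t ^ ((3 : ℝ) / 2) = t * √t := by
    rw [show (3 : ℝ) / 2 = 1 + 1 / 2 by norm_num, rpow_add ht, rpow_one, sqrt_eq_rpow]
  have hmass : √(2 * π * t) = 2 * √(π / 2) * √t := by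
    rw [show 2 * π * t = 2 ^ 2 * (π / 2) * t by ring, sqrt_mul (by positivity),
      sqrt_mul (by positivity), sqrt_sq zero_le_two]
  have hα : ∫ x in 0..κ * t, exp (-x ^ 2 / (2 * t)) =
      √t * ∫ r in 0..κ * √t, exp (-r ^ 2 / 2) := by
    rw [← integral_exp_neg_sq_div_sqrt_mul ht, mul_left_comm, mul_self_sqrt ht.le]
  constructor
  · rw [integral_Ioi_exp_neg_sq_div_mul_mul_sinh ht, integral_Ioi_neg_add_integral_Ioi_of_even
      heven (integrable_exp_neg_sq_div ht), integral_exp_neg_sq_div ht, hmass, hpow]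
    ring
  · rw [integral_Ioi_exp_neg_sq_div_mul_mul_cosh ht, integral_Ioi_neg_sub_integral_Ioi_of_even
      heven (integrable_exp_neg_sq_div ht), hα, hpow, nsmul_eq_mul]
    ring

/-- For `κ > 0` and `t > 0`, with `α(t) = ∫₀^{κ√t} e^{-r²/2} dr`,
`∫₀^∞ e^{-r²/(2t)} r sinh(κr) dr = √(π/2) κ t^{3/2} e^{κ²t/2}` and
`∫₀^∞ e^{-r²/(2t)} r cosh(κr) dr = t + κ t^{3/2} e^{κ²t/2} α(t)`. -/
theorem heat_integrals_order_one (κ : ℝ) (hκ : 0 < κ) (t : ℝ) (ht : 0 < t) :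
    (∫ r in Set.Ioi (0 : ℝ), Real.exp (-r ^ 2 / (2 * t)) * r * Real.sinh (κ * r)) =
      Real.sqrt (π / 2) * κ * t ^ ((3 : ℝ) / 2) * Real.exp (κ ^ 2 * t / 2) ∧
    (∫ r in Set.Ioi (0 : ℝ), Real.exp (-r ^ 2 / (2 * t)) * r * Real.cosh (κ * r)) =
      t + κ * t ^ ((3 : ℝ) / 2) * Real.exp (κ ^ 2 * t / 2) *
        (∫ r in (0 : ℝ)..(κ * Real.sqrt t), Real.exp (-r ^ 2 / 2)) :=
  heat_integrals_order_one_general κ t ht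
end

section
/- Fix a real number β with 1 < β < 2. Then for every real number r with 0 < r < (β - 1)/β, it holds that (1 - e^{-2r})/(2r) > 1/(1 + βr). -/
open Real

/-! The bound `exp x ≥ 1 + x + x²/2` gives `(1 - e^{-x})/x ≥ (1 + x/2)/(1 + x + x²/2)` for `x > 0`.
At `x = 2r` the right side is `(1 + r)/(1 + 2r + 2r²)`, and
`(1 + r)(1 + βr) - (1 + 2r + 2r²) = r((β - 1) - (2 - β)r)`, which is positive as soon as
`r < (β - 1)/β`. -/

theorem Real.one_add_half_div_le_one_sub_exp_neg_div {x : ℝ} (hx : 0 < x) :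
    (1 + x / 2) / (1 + x + x ^ 2 / 2) ≤ (1 - exp (-x)) / x := by
  have hquad : exp (-x) * (1 + x + x ^ 2 / 2) ≤ 1 :=
    calc exp (-x) * (1 + x + x ^ 2 / 2) ≤ exp (-x) * exp x := by
          gcongr; exact quadratic_le_exp_of_nonneg hx.le
      _ = 1 := by rw [← exp_add, neg_add_cancel, exp_zero]
  rw [div_le_div_iff₀ (by positivity) hx]
  linarith

theorem one_div_one_add_mul_lt_one_add_div_quadratic {β r : ℝ} (hβ : 1 < β) (hr0 : 0 < r)
    (hr1 : r < (β - 1) / β) :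
    1 / (1 + β * r) < (1 + r) / (1 + 2 * r + 2 * r ^ 2) := by
  have hβr : β * r < β - 1 := by rwa [lt_div_iff₀ (by linarith), mul_comm] at hr1
  have hkey : (2 - β) * r < β - 1 := by nlinarith
  rw [div_lt_div_iff₀ (by nlinarith) (by positivity)]
  nlinarith

theorem exp_ratio_sharp_lower_bound_general (β : ℝ) (hβ1 : 1 < β)
    (r : ℝ) (hr0 : 0 < r) (hr1 : r < (β - 1) / β) :
    (1 - Real.exp (-(2 * r))) / (2 * r) > 1 / (1 + β * r) := by
  calc 1 / (1 + β * r) < (1 + r) / (1 + 2 * r + 2 * r ^ 2) :=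
        one_div_one_add_mul_lt_one_add_div_quadratic hβ1 hr0 hr1
    _ = (1 + 2 * r / 2) / (1 + 2 * r + (2 * r) ^ 2 / 2) := by ring_nf
    _ ≤ (1 - exp (-(2 * r))) / (2 * r) := one_add_half_div_le_one_sub_exp_neg_div (by positivity)

/-- For `1 < β < 2` and `0 < r < (β-1)/β`, `(1 - e^{-2r})/(2r) > 1/(1+βr)`. -/
theorem exp_ratio_sharp_lower_bound (β : ℝ) (hβ1 : 1 < β) (hβ2 : β < 2)
    (r : ℝ) (hr0 : 0 < r) (hr1 : r < (β - 1) / β) :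
    (1 - Real.exp (-(2 * r))) / (2 * r) > 1 / (1 + β * r) :=
  exp_ratio_sharp_lower_bound_general β hβ1 r hr0 hr1
end

section
/- Let κ > 0 be a real number. Then for every r > 0: κr + log(1/(1 + 2κr)) < log(sinh(κr)/(κr)) < κr + log(1/(1 + κr)). -/
/-!
With `x = κr` and `exp x = cosh x + sinh x`, the two bounds are, after clearing denominators,
`x cosh x < (1 + x) sinh x` and `sinh x < x cosh x` (i.e. `tanh x < x`). The first is
`1 + 2x < exp (2x)` in disguise; the second holds because `y cosh y - sinh y` vanishes at `0`
and has derivative `y sinh y > 0`.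
-/

open Real

namespace Real

theorem sinh_lt_mul_cosh {x : ℝ} (hx : 0 < x) : sinh x < x * cosh x := by
  have hderiv (y : ℝ) : HasDerivAt (fun y => y * cosh y - sinh y) (y * sinh y) y :=
    (((hasDerivAt_id' y).mul (hasDerivAt_cosh y)).sub (hasDerivAt_sinh y)).congr_deriv (by ring)
  have hmono : StrictMonoOn (fun y => y * cosh y - sinh y) (Set.Ici 0) := by
    refine strictMonoOn_of_deriv_pos (convex_Ici 0) (by fun_prop) fun y hy => ?_
    rw [interior_Ici, Set.mem_Ioi] at hy
    rw [(hderiv y).deriv]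
    exact mul_pos hy (sinh_pos_iff.mpr hy)
  have h := hmono Set.self_mem_Ici hx.le hx
  simp only [zero_mul, sinh_zero, sub_zero] at h
  linarith

theorem mul_cosh_lt_one_add_mul_sinh {x : ℝ} (hx : 0 < x) : x * cosh x < (1 + x) * sinh x := by
  have hexp : 2 * x + 1 < exp x * exp x := by
    rw [← exp_add, ← two_mul]
    exact add_one_lt_exp (by positivity)
  have hinv : exp (-x) * exp x = 1 := by rw [← exp_add, neg_add_cancel, exp_zero]
  -- `2 ((1 + x) sinh x - x cosh x) = exp x - (2x + 1) exp (-x) = exp (-x) (exp (2x) - (2x + 1))`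
  have hpos : 0 < exp (-x) * (exp x * exp x - (2 * x + 1)) :=
    mul_pos (exp_pos (-x)) (sub_pos.mpr hexp)
  have hexpand : exp (-x) * (exp x * exp x - (2 * x + 1)) = exp x - (2 * x + 1) * exp (-x) := by
    linear_combination exp x * hinv
  rw [cosh_eq, sinh_eq]
  linarith

theorem exp_div_one_add_two_mul_lt_sinh_div {x : ℝ} (hx : 0 < x) :
    exp x / (1 + 2 * x) < sinh x / x := by
  rw [div_lt_div_iff₀ (by positivity) hx, ← cosh_add_sinh]
  linarith [mul_cosh_lt_one_add_mul_sinh hx]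

theorem sinh_div_lt_exp_div_one_add {x : ℝ} (hx : 0 < x) :
    sinh x / x < exp x / (1 + x) := by
  rw [div_lt_div_iff₀ hx (by positivity), ← cosh_add_sinh]
  linarith [sinh_lt_mul_cosh hx]

theorem log_exp_div {a : ℝ} (x : ℝ) (ha : 0 < a) : log (exp x / a) = x + log (1 / a) := by
  rw [div_eq_mul_one_div, log_mul (exp_pos x).ne' (one_div_pos.mpr ha).ne', log_exp]

end Real

/-- For `κ > 0` and `r > 0`,
`κr + log(1/(1+2κr)) < log(sinh(κr)/(κr)) < κr + log(1/(1+κr))`. -/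
theorem log_sinh_ratio_bounds (κ : ℝ) (hκ : 0 < κ) (r : ℝ) (hr : 0 < r) :
    κ * r + Real.log (1 / (1 + 2 * κ * r)) < Real.log (Real.sinh (κ * r) / (κ * r)) ∧
    Real.log (Real.sinh (κ * r) / (κ * r)) < κ * r + Real.log (1 / (1 + κ * r)) := by
  have hx : 0 < κ * r := mul_pos hκ hr
  have hratio : 0 < sinh (κ * r) / (κ * r) := div_pos (sinh_pos_iff.mpr hx) hx
  rw [mul_assoc 2, ← log_exp_div _ (by positivity), ← log_exp_div _ (by positivity)]
  exact ⟨log_lt_log (by positivity) (exp_div_one_add_two_mul_lt_sinh_div hx),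
    log_lt_log hratio (sinh_div_lt_exp_div_one_add hx)⟩
end

section
/- Let κ > 0. For t > 0 define h(t,r) = (2πt)^{-3/2} e^{-r²/(2t)} · (κr/sinh(κr)) · e^{-κ²t/2} for r > 0, ξ(t) = √(2/π)·κ^{-1}·t^{-3/2}·e^{-κ²t/2}, and η(t) = ∫₀^∞ e^{-r²/(2t)} r sinh(κr) log(sinh(κr)/(κr)) dr. Then for every t > 0, the entropy E(t) := -(4π/κ²)·∫₀^∞ h(t,r)·log h(t,r)·sinh²(κr) dr satisfies E(t) = (3/2)·log(2πt) + κ²t/2 + (κ²t + 3)/2 + ξ(t)·η(t). -/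
open Real MeasureTheory

/-- Heat kernel of 3-dimensional hyperbolic space of curvature `-κ²`,
as a function of time `t` and distance `r`. -/
noncomputable def hypHeatKernel (κ t r : ℝ) : ℝ :=
  (2 * π * t) ^ (-(3 : ℝ) / 2) * Real.exp (-r ^ 2 / (2 * t)) *
    (κ * r / Real.sinh (κ * r)) * Real.exp (-κ ^ 2 * t / 2)

/-- Entropy `-∫ h log h dVol` of the heat kernel of `ℍ³`, written as a
one-dimensional integral in polar coordinates (volume element `4π sinh²(κr)/κ² dr`). -/
noncomputable def hypEntropy (κ t : ℝ) : ℝ :=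
  -(4 * π / κ ^ 2) * ∫ r in Set.Ioi (0 : ℝ),
    hypHeatKernel κ t r * Real.log (hypHeatKernel κ t r) * (Real.sinh (κ * r)) ^ 2

/-- `ξ(t) = √(2/π) κ⁻¹ t^{-3/2} e^{-κ²t/2}`. -/
noncomputable def xiFun (κ t : ℝ) : ℝ :=
  Real.sqrt (2 / π) * κ⁻¹ * t ^ (-(3 : ℝ) / 2) * Real.exp (-κ ^ 2 * t / 2)

/-- `η(t) = ∫₀^∞ e^{-r²/(2t)} r sinh(κr) log(sinh(κr)/(κr)) dr`. -/
noncomputable def etaFun (κ t : ℝ) : ℝ :=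
  ∫ r in Set.Ioi (0 : ℝ),
    Real.exp (-r ^ 2 / (2 * t)) * r * Real.sinh (κ * r) *
      Real.log (Real.sinh (κ * r) / (κ * r))

/-!
Taking logarithms, `h log h · sinh²(κr)` is `(2πt)^{-3/2} e^{-κ²t/2} κ · r e^{-r²/2t} sinh(κr)`
times `-(3/2) log(2πt) - κ²t/2 - r²/(2t) - log(sinh(κr)/(κr))`. The last term integrates to `η`.
The others are the odd moments `∫₀^∞ rⁿ e^{-r²/2t} sinh(κr) dr`, `n = 1, 3`: by evenness and
oddness they equal `½ ∫_ℝ rⁿ e^{-r²/2t} e^{κr} dr`, i.e. `√(2πt)/2` times the `n`-th derivative at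
`κ` of the moment generating function `s ↦ e^{ts²/2}` of the centred Gaussian of variance `t`.
`ξ(t)` times the first moment is the total mass of the heat kernel, which is `1`.
-/

open ProbabilityTheory Set
open scoped NNReal

lemma integral_pow_mul_exp_mul_gaussianReal (μ : ℝ) (v : ℝ≥0) (n : ℕ) (s : ℝ) :
    ∫ x, x ^ n * exp (s * x) ∂gaussianReal μ v =
      iteratedDeriv n (fun s ↦ exp (μ * s + v * s ^ 2 / 2)) s := by
  rw [← mgf_id_gaussianReal, iteratedDeriv_mgf (by simp [integrableExpSet_id_gaussianReal]) n]
  rfl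

lemma integrable_pow_mul_exp_mul_gaussianReal (μ : ℝ) (v : ℝ≥0) (n : ℕ) (s : ℝ) :
    Integrable (fun x ↦ x ^ n * exp (s * x)) (gaussianReal μ v) :=
  integrable_pow_mul_exp_of_mem_interior_integrableExpSet (X := id)
    (by simp [integrableExpSet_id_gaussianReal]) n

lemma integrable_gaussianReal_iff {μ : ℝ} {v : ℝ≥0} (hv : v ≠ 0) {f : ℝ → ℝ} :
    Integrable f (gaussianReal μ v) ↔ Integrable (fun x ↦ gaussianPDFReal μ v x * f x) := by
  rw [gaussianReal_of_var_ne_zero _ hv, integrable_withDensity_iff_integrable_smul'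
    (measurable_gaussianPDF μ v) (ae_of_all _ fun _ ↦ gaussianPDF_lt_top)]
  simp [gaussianPDF, ENNReal.toReal_ofReal (gaussianPDFReal_nonneg μ v _)]

lemma exp_neg_sq_div_eq_sqrt_mul_gaussianPDFReal {v : ℝ} (hv : 0 < v) (x : ℝ) :
    exp (-x ^ 2 / (2 * v)) = √(2 * π * v) * gaussianPDFReal 0 v.toNNReal x := by
  simp only [gaussianPDFReal, Real.coe_toNNReal _ hv.le, sub_zero]
  rw [← mul_assoc, mul_inv_cancel₀ (by positivity), one_mul]

lemma integrable_pow_mul_gaussian_mul_exp {v : ℝ} (hv : 0 < v) (n : ℕ) (s : ℝ) :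
    Integrable (fun x ↦ x ^ n * exp (-x ^ 2 / (2 * v)) * exp (s * x)) := by
  have := ((integrable_gaussianReal_iff (μ := 0) (v := v.toNNReal) (Real.toNNReal_pos.2 hv).ne').1
    (integrable_pow_mul_exp_mul_gaussianReal 0 _ n s)).const_mul √(2 * π * v)
  convert this using 2 with x
  rw [exp_neg_sq_div_eq_sqrt_mul_gaussianPDFReal hv]; ring

lemma integral_pow_mul_gaussian_mul_exp {v : ℝ} (hv : 0 < v) (n : ℕ) (s : ℝ) :
    ∫ x, x ^ n * exp (-x ^ 2 / (2 * v)) * exp (s * x) =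
      √(2 * π * v) * iteratedDeriv n (fun s ↦ exp (v * s ^ 2 / 2)) s := by
  have h := integral_pow_mul_exp_mul_gaussianReal 0 v.toNNReal n s
  rw [integral_gaussianReal_eq_integral_smul (E := ℝ) (Real.toNNReal_pos.2 hv).ne'] at h
  simp only [Real.coe_toNNReal _ hv.le, zero_mul, zero_add, smul_eq_mul] at h
  rw [← h, ← integral_const_mul]
  congr 1 with x
  rw [exp_neg_sq_div_eq_sqrt_mul_gaussianPDFReal hv]; ring

lemma hasDerivAt_mul_exp_mul_sq_div_two {p : ℝ → ℝ} {p' v s : ℝ} (hp : HasDerivAt p p' s) :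
    HasDerivAt (fun s ↦ p s * exp (v * s ^ 2 / 2))
      ((p' + v * s * p s) * exp (v * s ^ 2 / 2)) s := by
  have hq : HasDerivAt (fun s ↦ v * s ^ 2 / 2) (v * s) s :=
    (((hasDerivAt_pow 2 s).const_mul v).div_const 2).congr_deriv (by ring)
  exact (hp.mul hq.exp).congr_deriv (by ring)

lemma iteratedDeriv_one_exp_mul_sq_div_two (v s : ℝ) :
    iteratedDeriv 1 (fun s ↦ exp (v * s ^ 2 / 2)) s = v * s * exp (v * s ^ 2 / 2) := by
  have h := hasDerivAt_mul_exp_mul_sq_div_two (v := v) (hasDerivAt_const s (1 : ℝ))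
  simp only [one_mul, mul_one, zero_add] at h
  rw [iteratedDeriv_one, h.deriv]

lemma iteratedDeriv_three_exp_mul_sq_div_two (v s : ℝ) :
    iteratedDeriv 3 (fun s ↦ exp (v * s ^ 2 / 2)) s =
      (3 * v ^ 2 * s + v ^ 3 * s ^ 3) * exp (v * s ^ 2 / 2) := by
  have d1 : deriv (fun s ↦ exp (v * s ^ 2 / 2)) = fun s ↦ v * s * exp (v * s ^ 2 / 2) := by
    ext s
    simpa using (hasDerivAt_mul_exp_mul_sq_div_two (v := v) (hasDerivAt_const s (1 : ℝ))).deriv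
  have d2 : deriv (fun s ↦ v * s * exp (v * s ^ 2 / 2)) =
      fun s ↦ (v + v ^ 2 * s ^ 2) * exp (v * s ^ 2 / 2) := by
    ext s
    rw [(hasDerivAt_mul_exp_mul_sq_div_two ((hasDerivAt_id' s).const_mul v)).deriv]
    ring
  have d3 : deriv (fun s ↦ (v + v ^ 2 * s ^ 2) * exp (v * s ^ 2 / 2)) =
      fun s ↦ (3 * v ^ 2 * s + v ^ 3 * s ^ 3) * exp (v * s ^ 2 / 2) := by
    ext s
    have hp : HasDerivAt (fun s ↦ v + v ^ 2 * s ^ 2) (v ^ 2 * (2 * s)) s := by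
      simpa using ((hasDerivAt_pow 2 s).const_mul (v ^ 2)).const_add v
    rw [(hasDerivAt_mul_exp_mul_sq_div_two hp).deriv]
    ring
  rw [iteratedDeriv_eq_iterate]
  simp only [Function.iterate_succ, Function.iterate_zero, Function.comp_apply, id, d1, d2, d3]

lemma integrable_pow_mul_gaussian_mul_sinh {v : ℝ} (hv : 0 < v) (n : ℕ) (s : ℝ) :
    Integrable (fun x ↦ x ^ n * exp (-x ^ 2 / (2 * v)) * sinh (s * x)) := by
  have h := ((integrable_pow_mul_gaussian_mul_exp hv n s).sub
    (integrable_pow_mul_gaussian_mul_exp hv n (-s))).div_const 2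
  convert h using 2 with x
  rw [Pi.sub_apply, sinh_eq, ← neg_mul]
  ring

lemma integral_pow_mul_gaussian_mul_sinh_of_odd {v : ℝ} (hv : 0 < v) {n : ℕ} (hn : Odd n)
    (s : ℝ) :
    ∫ x, x ^ n * exp (-x ^ 2 / (2 * v)) * sinh (s * x) =
      ∫ x, x ^ n * exp (-x ^ 2 / (2 * v)) * exp (s * x) := by
  have hreflect : ∫ x, x ^ n * exp (-x ^ 2 / (2 * v)) * exp (-s * x) =
      -∫ x, x ^ n * exp (-x ^ 2 / (2 * v)) * exp (s * x) := by
    rw [← integral_neg_eq_self, ← integral_neg]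
    congr 1 with x
    rw [hn.neg_pow, neg_sq, neg_mul_neg]
    ring
  have hsinh : (fun x ↦ x ^ n * exp (-x ^ 2 / (2 * v)) * sinh (s * x)) = fun x ↦
      (x ^ n * exp (-x ^ 2 / (2 * v)) * exp (s * x) -
        x ^ n * exp (-x ^ 2 / (2 * v)) * exp (-s * x)) / 2 := by
    ext x
    rw [sinh_eq, neg_mul]
    ring
  rw [hsinh, integral_div, integral_sub (integrable_pow_mul_gaussian_mul_exp hv n s)
    (integrable_pow_mul_gaussian_mul_exp hv n (-s)), hreflect]
  ring

lemma integral_Ioi_eq_half_integral_of_even {f : ℝ → ℝ} (hf : ∀ x, f (-x) = f x) :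
    ∫ x in Ioi 0, f x = (∫ x, f x) / 2 := by
  have heven : ∀ x, f |x| = f x := fun x ↦ by
    rcases abs_choice x with h | h <;> rw [h]
    exact hf x
  have h := integral_comp_abs (f := f)
  rw [funext heven] at h
  rw [h]
  ring

lemma integral_Ioi_pow_mul_gaussian_mul_sinh_of_odd {v : ℝ} (hv : 0 < v) {n : ℕ} (hn : Odd n)
    (s : ℝ) :
    ∫ x in Ioi 0, x ^ n * exp (-x ^ 2 / (2 * v)) * sinh (s * x) =
      √(2 * π * v) / 2 * iteratedDeriv n (fun s ↦ exp (v * s ^ 2 / 2)) s := by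
  rw [integral_Ioi_eq_half_integral_of_even, integral_pow_mul_gaussian_mul_sinh_of_odd hv hn,
    integral_pow_mul_gaussian_mul_exp hv]
  · ring
  · intro x
    rw [hn.neg_pow, neg_sq, mul_neg, sinh_neg]
    ring

lemma integral_Ioi_mul_gaussian_mul_sinh {v : ℝ} (hv : 0 < v) (s : ℝ) :
    ∫ x in Ioi 0, x * exp (-x ^ 2 / (2 * v)) * sinh (s * x) =
      √(2 * π * v) / 2 * (v * s * exp (v * s ^ 2 / 2)) := by
  simpa [iteratedDeriv_one_exp_mul_sq_div_two] using
    integral_Ioi_pow_mul_gaussian_mul_sinh_of_odd hv odd_one s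

lemma integral_Ioi_pow_three_mul_gaussian_mul_sinh {v : ℝ} (hv : 0 < v) (s : ℝ) :
    ∫ x in Ioi 0, x ^ 3 * exp (-x ^ 2 / (2 * v)) * sinh (s * x) =
      √(2 * π * v) / 2 * ((3 * v ^ 2 * s + v ^ 3 * s ^ 3) * exp (v * s ^ 2 / 2)) := by
  rw [integral_Ioi_pow_mul_gaussian_mul_sinh_of_odd hv (by decide),
    iteratedDeriv_three_exp_mul_sq_div_two]

lemma log_sinh_div_self_nonneg {y : ℝ} (hy : 0 < y) : 0 ≤ log (sinh y / y) :=
  log_nonneg ((one_le_div hy).2 (self_lt_sinh_iff.2 hy).le)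

lemma integrableOn_etaFun_integrand {κ t : ℝ} (hκ : 0 < κ) (ht : 0 < t) :
    IntegrableOn (fun r ↦ exp (-r ^ 2 / (2 * t)) * r * sinh (κ * r) *
      log (sinh (κ * r) / (κ * r))) (Ioi 0) := by
  have hdom := ((integrable_pow_mul_gaussian_mul_exp ht 0 (2 * κ)).const_mul κ⁻¹).integrableOn
    (s := Ioi 0)
  refine hdom.mono' (by fun_prop) ((ae_restrict_mem measurableSet_Ioi).mono fun r (hr : 0 < r) ↦ ?_)
  have hκr : 0 < κ * r := mul_pos hκ hr
  have hsinh : 0 < sinh (κ * r) := sinh_pos_iff.2 hκr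
  have hlog := log_sinh_div_self_nonneg hκr
  rw [norm_of_nonneg (by positivity)]
  calc exp (-r ^ 2 / (2 * t)) * r * sinh (κ * r) * log (sinh (κ * r) / (κ * r))
      ≤ exp (-r ^ 2 / (2 * t)) * r * sinh (κ * r) * (sinh (κ * r) / (κ * r)) :=
        mul_le_mul_of_nonneg_left (log_le_self (by positivity)) (by positivity)
    _ = κ⁻¹ * (exp (-r ^ 2 / (2 * t)) * sinh (κ * r) ^ 2) := by
        field_simp
    _ ≤ κ⁻¹ * (r ^ 0 * exp (-r ^ 2 / (2 * t)) * exp (2 * κ * r)) := by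
        have hle : sinh (κ * r) ≤ exp (κ * r) := by
          rw [sinh_eq]; linarith [exp_pos (κ * r), exp_pos (-(κ * r))]
        rw [pow_zero, one_mul, show 2 * κ * r = κ * r + κ * r by ring, exp_add, ← sq]
        gcongr

lemma hypHeatKernel_mul_log_mul_sinh_sq {κ t r : ℝ} (hκ : 0 < κ) (ht : 0 < t) (hr : 0 < r) :
    hypHeatKernel κ t r * log (hypHeatKernel κ t r) * sinh (κ * r) ^ 2 =
      (2 * π * t) ^ (-(3 : ℝ) / 2) * exp (-κ ^ 2 * t / 2) * κ *
        ((-(3 / 2) * log (2 * π * t) - κ ^ 2 * t / 2) *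
            (r * exp (-r ^ 2 / (2 * t)) * sinh (κ * r)) -
          (2 * t)⁻¹ * (r ^ 3 * exp (-r ^ 2 / (2 * t)) * sinh (κ * r)) -
          exp (-r ^ 2 / (2 * t)) * r * sinh (κ * r) * log (sinh (κ * r) / (κ * r))) := by
  have h2πt : 0 < 2 * π * t := by positivity
  have hκr : 0 < κ * r := mul_pos hκ hr
  have hsinh : 0 < sinh (κ * r) := sinh_pos_iff.2 hκr
  have hlog : log (hypHeatKernel κ t r) = -(3 / 2) * log (2 * π * t) - r ^ 2 / (2 * t) -
      log (sinh (κ * r) / (κ * r)) - κ ^ 2 * t / 2 := by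
    rw [hypHeatKernel, log_mul (by positivity) (by positivity), log_mul (by positivity)
      (by positivity), log_mul (by positivity) (by positivity), log_rpow h2πt, log_exp,
      log_exp, log_div hκr.ne' hsinh.ne', log_div hsinh.ne' hκr.ne']
    ring
  rw [hlog, hypHeatKernel]
  field_simp
  ring

lemma rpow_neg_three_halves_mul_sqrt {x : ℝ} (hx : 0 < x) :
    x ^ (-(3 : ℝ) / 2) * √x = x⁻¹ := by
  rw [Real.sqrt_eq_rpow, ← rpow_add hx]
  norm_num [rpow_neg_one]

lemma xiFun_eq {κ t : ℝ} (ht : 0 < t) :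
    xiFun κ t = 4 * π / κ ^ 2 * ((2 * π * t) ^ (-(3 : ℝ) / 2) * exp (-κ ^ 2 * t / 2) * κ) := by
  have h2π : 0 < 2 * π := by positivity
  have hconst : 4 * π * (2 * π) ^ (-(3 : ℝ) / 2) = √(2 / π) := by
    have hsq : √(2 / π) * √(2 * π) = 2 := by
      rw [← sqrt_mul (by positivity), show 2 / π * (2 * π) = 2 ^ 2 by field_simp,
        sqrt_sq zero_le_two]
    have h := rpow_neg_three_halves_mul_sqrt h2π
    field_simp at h ⊢
    nlinarith [sqrt_pos.2 h2π]
  rw [xiFun, mul_rpow h2π.le ht.le, ← hconst]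
  by_cases hκ : κ = 0
  · simp [hκ]
  · field_simp

/-- The heat kernel has unit mass: `∫ h dVol = 1`. -/
lemma xiFun_mul_integral_Ioi_mul_gaussian_mul_sinh {κ t : ℝ} (hκ : 0 < κ) (ht : 0 < t) :
    xiFun κ t * ∫ r in Ioi 0, r * exp (-r ^ 2 / (2 * t)) * sinh (κ * r) = 1 := by
  have h2πt : 0 < 2 * π * t := by positivity
  have hexp : exp (-κ ^ 2 * t / 2) * exp (t * κ ^ 2 / 2) = 1 := by
    rw [← exp_add]; ring_nf; exact exp_zero
  rw [xiFun_eq ht, integral_Ioi_mul_gaussian_mul_sinh ht]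
  calc _ = 2 * π * t * ((2 * π * t) ^ (-(3 : ℝ) / 2) * √(2 * π * t)) *
        (exp (-κ ^ 2 * t / 2) * exp (t * κ ^ 2 / 2)) := by
          field_simp
          norm_num
    _ = 1 := by
      rw [rpow_neg_three_halves_mul_sqrt h2πt, hexp]
      field_simp

lemma integral_Ioi_hypHeatKernel_mul_log_mul_sinh_sq {κ t : ℝ} (hκ : 0 < κ) (ht : 0 < t) :
    ∫ r in Ioi 0, hypHeatKernel κ t r * log (hypHeatKernel κ t r) * sinh (κ * r) ^ 2 =
      (2 * π * t) ^ (-(3 : ℝ) / 2) * exp (-κ ^ 2 * t / 2) * κ *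
        ((-(3 / 2) * log (2 * π * t) - κ ^ 2 * t / 2) *
            (∫ r in Ioi 0, r * exp (-r ^ 2 / (2 * t)) * sinh (κ * r)) -
          (2 * t)⁻¹ * (∫ r in Ioi 0, r ^ 3 * exp (-r ^ 2 / (2 * t)) * sinh (κ * r)) -
          etaFun κ t) := by
  have hg₁ : IntegrableOn (fun r ↦ r * exp (-r ^ 2 / (2 * t)) * sinh (κ * r)) (Ioi 0) := by
    simpa using (integrable_pow_mul_gaussian_mul_sinh ht 1 κ).integrableOn
  have hg₃ := (integrable_pow_mul_gaussian_mul_sinh ht 3 κ).integrableOn (s := Ioi 0)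
  rw [setIntegral_congr_fun measurableSet_Ioi
      fun r hr ↦ hypHeatKernel_mul_log_mul_sinh_sq hκ ht hr, integral_const_mul,
    integral_sub ?_ (integrableOn_etaFun_integrand hκ ht),
    integral_sub (hg₁.const_mul _) (hg₃.const_mul _), integral_const_mul, integral_const_mul]
  · rfl
  · exact (hg₁.const_mul _).sub (hg₃.const_mul _)

/-- For `κ > 0` and `t > 0`, the entropy of the heat kernel of `ℍ³`
satisfies `E(t) = (3/2) log(2πt) + κ²t/2 + (κ²t+3)/2 + ξ(t) η(t)`. -/
theorem hyp_entropy_decomposition (κ : ℝ) (hκ : 0 < κ) (t : ℝ) (ht : 0 < t) :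
    hypEntropy κ t =
      (3 / 2) * Real.log (2 * π * t) + κ ^ 2 * t / 2 + (κ ^ 2 * t + 3) / 2 +
        xiFun κ t * etaFun κ t := by
  have hmass := xiFun_mul_integral_Ioi_mul_gaussian_mul_sinh hκ ht
  have hξ := xiFun_eq (κ := κ) ht
  have hJ₃ : (2 * t)⁻¹ * ∫ r in Ioi 0, r ^ 3 * exp (-r ^ 2 / (2 * t)) * sinh (κ * r) =
      (3 + κ ^ 2 * t) / 2 * ∫ r in Ioi 0, r * exp (-r ^ 2 / (2 * t)) * sinh (κ * r) := by
    rw [integral_Ioi_pow_three_mul_gaussian_mul_sinh ht, integral_Ioi_mul_gaussian_mul_sinh ht]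
    field_simp
  rw [hypEntropy, integral_Ioi_hypHeatKernel_mul_log_mul_sinh_sq hκ ht, hJ₃]
  set J₁ := ∫ r in Ioi 0, r * exp (-r ^ 2 / (2 * t)) * sinh (κ * r)
  linear_combination (-etaFun κ t + (-(3 / 2) * log (2 * π * t) - κ ^ 2 * t / 2) * J₁ -
      (3 + κ ^ 2 * t) / 2 * J₁) * hξ +
    ((3 / 2) * log (2 * π * t) + κ ^ 2 * t / 2 + (3 + κ ^ 2 * t) / 2) * hmass
end
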